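/- For b ≥ 2, the zero-divisor graph of R = 𝔽_p[x]/(x^{2b}) has diameter 2. -/

import Mathlib

open Polynomial

noncomputable section

/-- The truncated polynomial ring `𝔽_p[x]/(x^c)`. -/
abbrev TPR (p c : ℕ) : Type := AdjoinRoot (X ^ c : (ZMod p)[X])

instance (p c : ℕ) [Fact p.Prime] : Finite (TPR p c) := by
  have hb : PowerBasis (ZMod p) (TPR p c) :=
    AdjoinRoot.powerBasis (pow_ne_zero c Polynomial.X_ne_zero)
  have : Module.Finite (ZMod p) (TPR p c) := Module.Finite.of_basis hb.basis
  exact Module.finite_of_finite (ZMod p)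

/-- The canonical representative (the unique representative of degree `< c`)
of an element of `𝔽_p[x]/(x^c)`. -/
def canon {p c : ℕ} (f : TPR p c) : (ZMod p)[X] :=
  Function.surjInv (AdjoinRoot.mk_surjective (g := (X ^ c : (ZMod p)[X]))) f %ₘ X ^ c

/-- The minimal degree: the least exponent with nonzero coefficient in the
canonical representative. -/
def mindeg {p c : ℕ} (f : TPR p c) : ℕ := (canon f).natTrailingDegree

/-- The set of nonzero zero-divisors of `𝔽_p[x]/(x^c)`. -/
def zd (p c : ℕ) : Set (TPR p c) := {f | f ≠ 0 ∧ ∃ g, g ≠ 0 ∧ f * g = 0}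

/-- The zero-divisor graph of `𝔽_p[x]/(x^c)`: vertices are the nonzero
zero-divisors, and `f ~ g` iff `f ≠ g` and `f * g = 0`. -/
def zdGraph (p c : ℕ) : SimpleGraph (zd p c) where
  Adj a b := a ≠ b ∧ (a : TPR p c) * (b : TPR p c) = 0
  symm := ⟨fun a b h => ⟨h.1.symm, by rw [mul_comm]; exact h.2⟩⟩
  loopless := ⟨fun a h => h.1 rfl⟩

/-
Every nonzero zero-divisor of `𝔽_p[x]/(x^c)` has zero constant term, so it is annihilated by
`x^(c-1)`: this vertex is adjacent to all others and the diameter is at most `2`. It is not `1`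
because the distinct vertices `x` and `x^2` are not adjacent once `c ≥ 4`.
-/

namespace SimpleGraph

variable {V : Type*} {G : SimpleGraph V}

lemma ediam_eq_two_of_forall_adj_of_ne_top (w : V) (hw : ∀ v, w ≠ v → G.Adj w v)
    (hG : G ≠ ⊤) : G.ediam = 2 := by
  have : Nontrivial V := by
    by_contra h
    rw [not_nontrivial_iff_subsingleton] at h
    exact hG (Subsingleton.elim _ _)
  have hle : G.ediam ≤ 2 :=
    calc G.ediam ≤ 2 * G.eccent w := G.ediam_le_two_mul_eccent w
      _ ≤ 2 * 1 := by gcongr; exact (G.eccent_le_one_iff w).mpr hw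
      _ = 2 := mul_one 2
  have hne_zero : G.ediam ≠ 0 := G.ediam_ne_zero
  have hne_one : G.ediam ≠ 1 := fun h => hG (G.ediam_eq_one.mp h)
  lift G.ediam to ℕ using ne_top_of_le_ne_top (by decide) hle with d
  norm_cast at *
  omega

end SimpleGraph

namespace AdjoinRoot

variable {R : Type*} [CommRing R] [IsDomain R] {C : ℕ}

lemma root_X_pow_pow_eq_zero_iff {k : ℕ} : root (X ^ C : R[X]) ^ k = 0 ↔ C ≤ k := by
  rw [← mk_X, ← map_pow, mk_eq_zero, pow_dvd_pow_iff X_ne_zero not_isUnit_X]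

lemma root_X_pow_pow_ne_root_X_pow_pow {j k : ℕ} (hjk : j < k) (hk : k < C) :
    root (X ^ C : R[X]) ^ j ≠ root (X ^ C : R[X]) ^ k := by
  intro h
  have h' := congrArg (· * root (X ^ C : R[X]) ^ (C - 1 - j)) h
  simp only [← pow_add] at h'
  rw [root_X_pow_pow_eq_zero_iff.mpr (by omega : C ≤ k + (C - 1 - j)),
    root_X_pow_pow_eq_zero_iff] at h'
  omega

lemma mul_root_X_pow_pow_pred_eq_zero {f g : AdjoinRoot (X ^ C : R[X])} (hfg : f * g = 0)
    (hg : g ≠ 0) : f * root (X ^ C : R[X]) ^ (C - 1) = 0 := by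
  obtain ⟨F, rfl⟩ := mk_surjective f
  obtain ⟨G, rfl⟩ := mk_surjective g
  rw [← map_mul, mk_eq_zero] at hfg
  have hXF : X ∣ F := by
    by_contra hX
    exact hg (mk_eq_zero.mpr (prime_X.pow_dvd_of_dvd_mul_left C hX hfg))
  obtain ⟨F', rfl⟩ := hXF
  obtain ⟨D, rfl⟩ : ∃ D, C = D + 1 := Nat.exists_eq_succ_of_ne_zero (by
    rintro rfl
    exact hg (mk_eq_zero.mpr (by simp)))
  rw [← mk_X, ← map_pow, ← map_mul, mk_eq_zero, Nat.add_sub_cancel]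
  exact ⟨F', by ring⟩

end AdjoinRoot

section ZeroDivisorGraph

open AdjoinRoot

variable {p C : ℕ} [Fact p.Prime]

lemma root_pow_mem_zd {k : ℕ} (hk₀ : 1 ≤ k) (hk : k < C) :
    root (X ^ C : (ZMod p)[X]) ^ k ∈ zd p C := by
  refine ⟨fun h => by rw [root_X_pow_pow_eq_zero_iff] at h; omega,
    root (X ^ C) ^ (C - k), fun h => by rw [root_X_pow_pow_eq_zero_iff] at h; omega, ?_⟩
  rw [← pow_add, root_X_pow_pow_eq_zero_iff]
  omega

def rootPowVertex {k : ℕ} (hk₀ : 1 ≤ k) (hk : k < C) : zd p C :=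
  ⟨root (X ^ C) ^ k, root_pow_mem_zd hk₀ hk⟩

lemma zdGraph_adj_rootPowVertex_pred (hC : 2 ≤ C) (v : zd p C)
    (hv : rootPowVertex (k := C - 1) (by omega) (by omega) ≠ v) :
    (zdGraph p C).Adj (rootPowVertex (k := C - 1) (by omega) (by omega)) v := by
  obtain ⟨-, g, hg, hfg⟩ := v.2
  exact ⟨hv, by rw [mul_comm]; exact mul_root_X_pow_pow_pred_eq_zero hfg hg⟩

lemma zdGraph_ne_top (hC : 4 ≤ C) : zdGraph p C ≠ ⊤ := by
  intro h
  have hadj : (zdGraph p C).Adj (rootPowVertex (k := 1) le_rfl (by omega))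
      (rootPowVertex (k := 2) (by omega) (by omega)) := by
    rw [h, SimpleGraph.top_adj]
    exact fun he =>
      root_X_pow_pow_ne_root_X_pow_pow one_lt_two (by omega) (congrArg Subtype.val he)
  have hmul := hadj.2
  rw [rootPowVertex, rootPowVertex, ← pow_add, root_X_pow_pow_eq_zero_iff] at hmul
  omega

lemma zdGraph_ediam_eq_two (hC : 4 ≤ C) : (zdGraph p C).ediam = 2 :=
  SimpleGraph.ediam_eq_two_of_forall_adj_of_ne_top _
    (zdGraph_adj_rootPowVertex_pred (C := C) (by omega)) (zdGraph_ne_top hC)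

end ZeroDivisorGraph

/-- For `b ≥ 2`, the zero-divisor graph of `𝔽_p[x]/(x^(2b))` has diameter `2`. -/
theorem stmt_8 (p b : ℕ) [Fact p.Prime] (hb : 2 ≤ b) :
    (zdGraph p (2 * b)).diam = 2 := by
  rw [SimpleGraph.diam, zdGraph_ediam_eq_two (by omega)]
  rfl
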